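/- Let f be an excursion and let s,t ∈ [0,1]. If s ⪯_f t, then d_T[f](t,1) = d_T[f](s,1) + d_T[f](s,t). -/

import Mathlib

open Set Filter Topology
open scoped Classical

noncomputable section

/-- Left limit of `f` at `t`, with the convention `f(0−) = 0`. -/
def lm (f : ℝ → ℝ) (t : ℝ) : ℝ := if t = 0 then 0 else Function.leftLim f t

/-- The jump `Δ_t(f) = f t − f(t−)`. -/
def jump (f : ℝ → ℝ) (t : ℝ) : ℝ := f t - lm f t

/-- `inf_{[s,t]} f`. -/
def infIcc (f : ℝ → ℝ) (s t : ℝ) : ℝ := sInf (f '' Icc s t)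

/-- An excursion: a càdlàg function on `[0,1]`, nonnegative, vanishing at `1` (and
extended by `0` outside `[0,1]`), all of whose jumps are nonnegative. -/
structure IsExcursion (f : ℝ → ℝ) : Prop where
  nonneg : ∀ t ∈ Icc (0:ℝ) 1, 0 ≤ f t
  zero_outside : ∀ t, t ∉ Icc (0:ℝ) 1 → f t = 0
  rightCont : ∀ t ∈ Ico (0:ℝ) 1, Tendsto f (𝓝[>] t) (𝓝 (f t))
  leftLimEx : ∀ t ∈ Ioc (0:ℝ) 1, Tendsto f (𝓝[<] t) (𝓝 (Function.leftLim f t))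
  one : f 1 = 0
  jump_nonneg : ∀ t ∈ Icc (0:ℝ) 1, 0 ≤ jump f t

/-- The genealogical relation `s ⪯_f t` : `s ≤ t` and `f(s−) ≤ inf_{[s,t]} f`. -/
def pre (f : ℝ → ℝ) (s t : ℝ) : Prop := s ≤ t ∧ lm f s ≤ infIcc f s t

/-- `x_s^t(f) = 1_{s ≤ t} · max(inf_{[s,t]} f − f(s−), 0)`. -/
def xst (f : ℝ → ℝ) (s t : ℝ) : ℝ := if s ≤ t then max (infIcc f s t - lm f s) 0 else 0

/-- The most recent common ancestor `s ∧_f t`. -/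
def mrca (f : ℝ → ℝ) (s t : ℝ) : ℝ := sSup {r : ℝ | 0 ≤ r ∧ pre f r s ∧ pre f r t}

/-- `δ_t(a,b) = min(|a−b|, Δ_t(f) − |a−b|)`, the circle pseudo-distance on `[0, Δ_t(f)]`. -/
def cdel (f : ℝ → ℝ) (t a b : ℝ) : ℝ := min |a - b| (jump f t - |a - b|)

/-- `d_O(s,t) = ∑_{s ≺_f r ⪯_f t} δ_r(0, x_r^t)`. -/
def dO (f : ℝ → ℝ) (s t : ℝ) : ℝ :=
  ∑' r : ℝ, if pre f s r ∧ s < r ∧ pre f r t then cdel f r 0 (xst f r t) else 0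

/-- `d_T(s,t) = f t − inf_{[s,t]} f − ∑_{s ≺_f r ⪯_f t} x_r^t`, intended for `s ⪯_f t`. -/
def dTanc (f : ℝ → ℝ) (s t : ℝ) : ℝ :=
  f t - infIcc f s t - ∑' r : ℝ, if pre f s r ∧ s < r ∧ pre f r t then xst f r t else 0

/-- The looptree pseudo-distance `d_L[f]`. -/
def dL (f : ℝ → ℝ) (s t : ℝ) : ℝ :=
  cdel f (mrca f s t) (xst f (mrca f s t) s) (xst f (mrca f s t) t)
    + dO f (mrca f s t) s + dO f (mrca f s t) t

/-- The tree pseudo-distance `d_T[f]`. -/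
def dT (f : ℝ → ℝ) (s t : ℝ) : ℝ := dTanc f (mrca f s t) s + dTanc f (mrca f s t) t

/-- The vernation pseudo-distance `d_V[f] = d_T[f] + 2·d_L[f]`. -/
def dV (f : ℝ → ℝ) (s t : ℝ) : ℝ := dT f s t + 2 * dL f s t

/-- `Jf(t) = ∑_{r ⪯_f t} x_r^t(f)`. -/
def Jop (f : ℝ → ℝ) (t : ℝ) : ℝ := ∑' r : ℝ, if pre f r t then xst f r t else 0

/-- `J^ε f(t) = ∑_{r ⪯_f t, Δ_r(f) ≥ ε} x_r^t(f)`. -/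
def Jeps (f : ℝ → ℝ) (ε : ℝ) (t : ℝ) : ℝ :=
  ∑' r : ℝ, if pre f r t ∧ ε ≤ jump f r then xst f r t else 0

/-- Pure jump growth (PJG) excursion: `f(t) = ∑_{r ⪯_f t} x_r^t(f)` on `[0,1]`. -/
def IsPJG (f : ℝ → ℝ) : Prop := ∀ t ∈ Icc (0:ℝ) 1, f t = Jop f t

/-- An increasing bijection from `[0,1]` onto itself. -/
def IncBij (l : ℝ → ℝ) : Prop :=
  StrictMonoOn l (Icc (0:ℝ) 1) ∧ Set.BijOn l (Icc (0:ℝ) 1) (Icc (0:ℝ) 1)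

/-- The Skorokhod distance `ρ` on functions `[0,1] → ℝ`. -/
def skor (f g : ℝ → ℝ) : ℝ :=
  sInf {c : ℝ | 0 ≤ c ∧ ∃ l : ℝ → ℝ, IncBij l ∧
    ∀ x ∈ Icc (0:ℝ) 1, |l x - x| ≤ c ∧ |f x - g (l x)| ≤ c}

/-!
The key fact is additivity of `d_T` along ancestral lines: if `0 ≤ a ⪯ s ⪯ t` then
`d_T(a,t) = d_T(a,s) + d_T(s,t)`. Indeed `inf_{[a,t]} f = inf_{[a,s]} f`, a point `r < s` is an
ancestor of `t` exactly when it is one of `s`, with `x_r^t = x_r^s`, and `s` itself contributes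
`x_s^t = x_s^s + (inf_{[s,t]} f − f s)`.

The ancestors of `1` are the zeros of `f(·−)`. These are closed under suprema, so `u ∧ 1` is the
last zero in `[0,u]`, and `d_T[f](u,1) = d_T(u ∧ 1, u)`. If `t ∧ 1 ≤ s`, then `s ∧ 1 = t ∧ 1` and
additivity along `t ∧ 1 ⪯ s ⪯ t` gives the claim. Otherwise `f(s−) = 0`, so `s ∧ 1 = s`, and we
use additivity along `s ⪯ t ∧ 1 ⪯ t` and `d_T(s, t ∧ 1) = 0`.
-/

def lineWeight (f : ℝ → ℝ) (a b r : ℝ) : ℝ :=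
  if pre f a r ∧ a < r ∧ pre f r b then xst f r b else 0

theorem dTanc_eq_sub_tsum (f : ℝ → ℝ) (a b : ℝ) :
    dTanc f a b = f b - infIcc f a b - ∑' r, lineWeight f a b r := rfl

theorem infIcc_self (f : ℝ → ℝ) (s : ℝ) : infIcc f s s = f s := by
  rw [infIcc, Icc_self, image_singleton, csInf_singleton]

theorem xst_nonneg (f : ℝ → ℝ) (r b : ℝ) : 0 ≤ xst f r b := by
  unfold xst
  split_ifs
  exacts [le_max_right _ _, le_rfl]

theorem xst_of_pre {f : ℝ → ℝ} {r b : ℝ} (h : pre f r b) : xst f r b = infIcc f r b - lm f r := by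
  rw [xst, if_pos h.1, max_eq_left (sub_nonneg.2 h.2)]

theorem lineWeight_nonneg (f : ℝ → ℝ) (a b r : ℝ) : 0 ≤ lineWeight f a b r := by
  unfold lineWeight
  split_ifs
  exacts [xst_nonneg f r b, le_rfl]

theorem dTanc_self (f : ℝ → ℝ) (s : ℝ) : dTanc f s s = 0 := by
  have h : ∀ r, lineWeight f s s r = 0 := fun r =>
    if_neg fun ⟨_, hsr, hrs⟩ => (not_le.2 hsr) hrs.1
  rw [dTanc_eq_sub_tsum, infIcc_self, tsum_congr h, tsum_zero]
  ring

namespace IsExcursion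

variable {f : ℝ → ℝ}

theorem apply_nonneg (hf : IsExcursion f) (x : ℝ) : 0 ≤ f x := by
  by_cases hx : x ∈ Icc (0:ℝ) 1
  · exact hf.nonneg x hx
  · exact (hf.zero_outside x hx).ge

theorem lm_nonneg (hf : IsExcursion f) {r : ℝ} (hr : r ∈ Icc (0:ℝ) 1) : 0 ≤ lm f r := by
  rcases hr.1.eq_or_lt with rfl | hr0
  · simp [lm]
  · rw [lm, if_neg hr0.ne']
    exact ge_of_tendsto (hf.leftLimEx r ⟨hr0, hr.2⟩) (Eventually.of_forall hf.apply_nonneg)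

theorem lm_one (hf : IsExcursion f) : lm f 1 = 0 := by
  have h1 : (1:ℝ) ∈ Icc 0 1 := ⟨zero_le_one, le_rfl⟩
  have hjump := hf.jump_nonneg 1 h1
  rw [jump, hf.one] at hjump
  linarith [hf.lm_nonneg h1]

theorem bddBelow_image (hf : IsExcursion f) (s : Set ℝ) : BddBelow (f '' s) :=
  ⟨0, by rintro _ ⟨x, -, rfl⟩; exact hf.apply_nonneg x⟩

theorem infIcc_le (hf : IsExcursion f) {s t x : ℝ} (hx : x ∈ Icc s t) : infIcc f s t ≤ f x :=
  csInf_le (hf.bddBelow_image _) (mem_image_of_mem f hx)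

theorem infIcc_nonneg (hf : IsExcursion f) (s t : ℝ) : 0 ≤ infIcc f s t :=
  Real.sInf_nonneg (by rintro _ ⟨x, -, rfl⟩; exact hf.apply_nonneg x)

theorem infIcc_anti (hf : IsExcursion f) {s s' t' t : ℝ} (hs : s ≤ s') (ht : t' ≤ t)
    (h : s' ≤ t') : infIcc f s t ≤ infIcc f s' t' :=
  csInf_le_csInf (hf.bddBelow_image _) ((nonempty_Icc.2 h).image f)
    (image_mono (Icc_subset_Icc hs ht))

theorem infIcc_eq_min (hf : IsExcursion f) {s u t : ℝ} (hsu : s ≤ u) (hut : u ≤ t) :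
    infIcc f s t = min (infIcc f s u) (infIcc f u t) := by
  rw [infIcc, ← Icc_union_Icc_eq_Icc hsu hut, image_union,
    csInf_union (hf.bddBelow_image _) ((nonempty_Icc.2 hsu).image f)
      (hf.bddBelow_image _) ((nonempty_Icc.2 hut).image f)]
  rfl

theorem infIcc_le_lm (hf : IsExcursion f) {a b t : ℝ} (hab : a < b) (hbt : b ≤ t)
    (hb : b ∈ Ioc (0:ℝ) 1) : infIcc f a t ≤ lm f b := by
  rw [lm, if_neg hb.1.ne']
  refine ge_of_tendsto (hf.leftLimEx b hb) ?_
  filter_upwards [Ioo_mem_nhdsLT hab] with x hx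
  exact hf.infIcc_le ⟨hx.1.le, hx.2.le.trans hbt⟩

theorem pre_refl (hf : IsExcursion f) {s : ℝ} (hs : s ∈ Icc (0:ℝ) 1) : pre f s s := by
  have hjump := hf.jump_nonneg s hs
  rw [jump] at hjump
  exact ⟨le_rfl, by rw [infIcc_self]; linarith⟩

theorem pre_of_lm_eq_zero (hf : IsExcursion f) {a t : ℝ} (ha : lm f a = 0) (hat : a ≤ t) :
    pre f a t :=
  ⟨hat, ha ▸ hf.infIcc_nonneg a t⟩

theorem pre_of_pre_of_le (hf : IsExcursion f) {a r t : ℝ} (hat : pre f a t) (hr : r ∈ Icc a t) :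
    pre f a r :=
  ⟨hr.1, hat.2.trans (hf.infIcc_anti le_rfl hr.2 hr.1)⟩

theorem pre_one_iff (hf : IsExcursion f) {r : ℝ} (hr : r ∈ Icc (0:ℝ) 1) :
    pre f r 1 ↔ lm f r = 0 := by
  have hinf : infIcc f r 1 = 0 :=
    le_antisymm (hf.one ▸ hf.infIcc_le ⟨hr.2, le_rfl⟩) (hf.infIcc_nonneg r 1)
  refine ⟨fun h => le_antisymm (hinf ▸ h.2) (hf.lm_nonneg hr), fun h => ?_⟩
  exact hf.pre_of_lm_eq_zero h hr.2

theorem infIcc_eq_of_pre (hf : IsExcursion f) {r s t : ℝ} (hrs : r < s) (hs : s ∈ Ioc (0:ℝ) 1)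
    (hst : pre f s t) : infIcc f r t = infIcc f r s := by
  rw [hf.infIcc_eq_min hrs.le hst.1]
  exact min_eq_left ((hf.infIcc_le_lm hrs le_rfl hs).trans hst.2)

theorem xst_eq_zero_of_lm_eq_zero (hf : IsExcursion f) {r b : ℝ} (hr : 0 ≤ r) (hrb : r < b)
    (hb1 : b ≤ 1) (hb : lm f b = 0) : xst f r b = 0 := by
  have hinf : infIcc f r b ≤ 0 := hb ▸ hf.infIcc_le_lm hrb le_rfl ⟨hr.trans_lt hrb, hb1⟩
  have hlm := hf.lm_nonneg ⟨hr, hrb.le.trans hb1⟩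
  rw [xst, if_pos hrb.le, max_eq_right (by linarith)]

/-- The weights telescope, since `inf_{[a,b]} f ≤ f(c−)` for `a < c ≤ b`. -/
theorem sum_xst_le (hf : IsExcursion f) {a b : ℝ} (ha : 0 ≤ a) (hb : b ≤ 1) (F : Finset ℝ)
    (hF : ∀ r ∈ F, r ∈ Ioc a b) : ∑ r ∈ F, xst f r b ≤ f b - infIcc f a b := by
  induction F using Finset.induction_on_min generalizing a with
  | empty =>
    rw [Finset.sum_empty, sub_nonneg]
    by_cases hab : a ≤ b
    · exact hf.infIcc_le ⟨hab, le_rfl⟩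
    · rw [infIcc, Icc_eq_empty hab, image_empty, Real.sInf_empty]
      exact hf.apply_nonneg b
  | insert c F hcF ih =>
    have hc := hF c (Finset.mem_insert_self c F)
    have hrest := ih (ha.trans hc.1.le) fun r hr =>
      ⟨hcF r hr, (hF r (Finset.mem_insert_of_mem hr)).2⟩
    have hcle : infIcc f a b ≤ lm f c := hf.infIcc_le_lm hc.1 hc.2 ⟨ha.trans_lt hc.1, hc.2.trans hb⟩
    have hmono : infIcc f a b ≤ infIcc f c b := hf.infIcc_anti hc.1.le le_rfl hc.2
    rw [Finset.sum_insert fun hcF' => lt_irrefl c (hcF c hcF'), xst, if_pos hc.2]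
    rcases le_total (infIcc f c b - lm f c) 0 with hx | hx
    · rw [max_eq_right hx]; linarith
    · rw [max_eq_left hx]; linarith

theorem summable_lineWeight (hf : IsExcursion f) {a b : ℝ} (ha : 0 ≤ a) (hb : b ≤ 1) :
    Summable (lineWeight f a b) := by
  refine summable_of_sum_le (c := f b - infIcc f a b) (lineWeight_nonneg f a b) fun F => ?_
  simp only [lineWeight]
  rw [← Finset.sum_filter]
  refine hf.sum_xst_le ha hb _ fun r hr => ?_
  obtain ⟨-, har, hrb⟩ := (Finset.mem_filter.1 hr).2
  exact ⟨har, hrb.1⟩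

theorem dTanc_eq_zero_of_lm_eq_zero (hf : IsExcursion f) {a b : ℝ} (ha : 0 ≤ a) (hab : pre f a b)
    (hb1 : b ≤ 1) (hb : lm f b = 0) : dTanc f a b = 0 := by
  rcases hab.1.eq_or_lt with rfl | hab'
  · exact dTanc_self f a
  have hweight : ∀ r, lineWeight f a b r = if r = b then f b else 0 := by
    intro r
    rcases lt_trichotomy r b with hrb | rfl | hrb
    · rw [if_neg hrb.ne, lineWeight]
      split_ifs with h
      · exact hf.xst_eq_zero_of_lm_eq_zero (ha.trans h.2.1.le) hrb hb1 hb
      · rfl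
    · have hr := hf.pre_refl ⟨ha.trans hab'.le, hb1⟩
      rw [if_pos rfl, lineWeight, if_pos ⟨hab, hab', hr⟩, xst_of_pre hr, infIcc_self, hb, sub_zero]
    · rw [if_neg hrb.ne', lineWeight, if_neg fun h => (not_le.2 hrb) h.2.2.1]
  have hinf : infIcc f a b = 0 :=
    le_antisymm ((hf.infIcc_le_lm hab' le_rfl ⟨ha.trans_lt hab', hb1⟩).trans hb.le)
      (hf.infIcc_nonneg a b)
  rw [dTanc_eq_sub_tsum, hinf, tsum_congr hweight, tsum_ite_eq]
  ring

theorem lineWeight_split (hf : IsExcursion f) {a s t : ℝ} (ha : 0 ≤ a) (has : pre f a s)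
    (has' : a < s) (hst : pre f s t) (ht : t ≤ 1) (r : ℝ) :
    lineWeight f a t r =
      lineWeight f a s r + lineWeight f s t r + if r = s then infIcc f s t - f s else 0 := by
  have hs : s ∈ Ioc (0:ℝ) 1 := ⟨ha.trans_lt has', hst.1.trans ht⟩
  rcases lt_trichotomy r s with hrs | rfl | hrs
  · have hinf := hf.infIcc_eq_of_pre hrs hs hst
    rw [show lineWeight f s t r = 0 from if_neg fun h => (not_lt.2 hrs.le) h.2.1, if_neg hrs.ne,
      add_zero, add_zero]
    simp only [lineWeight, pre, xst, hinf, hrs.le, hrs.le.trans hst.1, true_and, if_true]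
  · have hrr := hf.pre_refl ⟨hs.1.le, hs.2⟩
    rw [if_pos rfl, lineWeight, lineWeight, lineWeight, if_pos ⟨has, has', hst⟩,
      if_pos ⟨has, has', hrr⟩, if_neg fun h => lt_irrefl r h.2.1, xst_of_pre hst, xst_of_pre hrr,
      infIcc_self]
    ring
  · rw [show lineWeight f a s r = 0 from if_neg fun h => (not_le.2 hrs) h.2.2.1, if_neg hrs.ne',
      zero_add, add_zero]
    by_cases hrt : pre f r t
    · have hsr := hf.pre_of_pre_of_le hst ⟨hrs.le, hrt.1⟩
      have har : pre f a r :=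
        ⟨(has'.trans hrs).le, (hf.infIcc_eq_of_pre has' hs hsr).symm ▸ has.2⟩
      rw [lineWeight, lineWeight, if_pos ⟨har, has'.trans hrs, hrt⟩, if_pos ⟨hsr, hrs, hrt⟩]
    · rw [lineWeight, lineWeight, if_neg fun h => hrt h.2.2, if_neg fun h => hrt h.2.2]

theorem dTanc_add (hf : IsExcursion f) {a s t : ℝ} (ha : 0 ≤ a) (has : pre f a s)
    (hst : pre f s t) (ht : t ≤ 1) : dTanc f a t = dTanc f a s + dTanc f s t := by
  rcases has.1.eq_or_lt with rfl | has'
  · rw [dTanc_self, zero_add]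
  have hs : s ∈ Ioc (0:ℝ) 1 := ⟨ha.trans_lt has', hst.1.trans ht⟩
  have hsum₁ := hf.summable_lineWeight ha hs.2
  have hsum₂ := hf.summable_lineWeight hs.1.le ht
  simp only [dTanc_eq_sub_tsum]
  rw [hf.infIcc_eq_of_pre has' hs hst, tsum_congr (hf.lineWeight_split ha has has' hst ht),
    (hsum₁.add hsum₂).tsum_add ⟨_, hasSum_ite_eq s _⟩, hsum₁.tsum_add hsum₂, tsum_ite_eq]
  ring

theorem mrca_of_pre (hf : IsExcursion f) {s t : ℝ} (hs : s ∈ Icc (0:ℝ) 1) (hst : pre f s t) :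
    mrca f s t = s :=
  IsGreatest.csSup_eq ⟨⟨hs.1, hf.pre_refl hs, hst⟩, fun _ hr => hr.2.1.1⟩

theorem lm_eq_zero_of_frequently (hf : IsExcursion f) {b : ℝ} (hb : b ∈ Ioc (0:ℝ) 1)
    (h : ∀ ε > 0, ∃ᶠ x in 𝓝[<] b, f x < ε) : lm f b = 0 := by
  refine le_antisymm (le_of_forall_gt_imp_ge_of_dense fun ε hε => ?_) (hf.lm_nonneg ⟨hb.1.le, hb.2⟩)
  by_contra! hlt
  rw [lm, if_neg hb.1.ne'] at hlt
  obtain ⟨x, hx, hx'⟩ :=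
    ((h ε hε).and_eventually ((hf.leftLimEx b hb).eventually (lt_mem_nhds hlt))).exists
  exact lt_asymm hx hx'

theorem lm_csSup_eq_zero (hf : IsExcursion f) {A : Set ℝ} (hne : A.Nonempty)
    (hA : ∀ r ∈ A, r ∈ Icc (0:ℝ) 1 ∧ lm f r = 0) : lm f (sSup A) = 0 := by
  by_cases hMA : sSup A ∈ A
  · exact (hA _ hMA).2
  have hbdd : BddAbove A := ⟨1, fun r hr => (hA r hr).1.2⟩
  have hlt : ∀ r ∈ A, r < sSup A := fun r hr =>
    (le_csSup hbdd hr).lt_of_ne fun h => hMA (h ▸ hr)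
  obtain ⟨r₀, hr₀⟩ := hne
  have hM : sSup A ∈ Ioc (0:ℝ) 1 :=
    ⟨(hA r₀ hr₀).1.1.trans_lt (hlt r₀ hr₀), csSup_le ⟨r₀, hr₀⟩ fun r hr => (hA r hr).1.2⟩
  refine hf.lm_eq_zero_of_frequently hM fun ε hε => (nhdsLT_basis _).frequently_iff.2 fun l hl => ?_
  obtain ⟨r, hrA, hlr⟩ := exists_lt_of_lt_csSup ⟨r₀, hr₀⟩ (max_lt hl hM.1)
  obtain ⟨⟨-, hr1⟩, hrlm⟩ := hA r hrA
  have hr : r ∈ Ioc (0:ℝ) 1 := ⟨(le_max_right l 0).trans_lt hlr, hr1⟩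
  rw [lm, if_neg hr.1.ne'] at hrlm
  have htend : Tendsto f (𝓝[<] r) (𝓝 0) := hrlm ▸ hf.leftLimEx r hr
  obtain ⟨x, hx, hfx⟩ := Filter.nonempty_of_mem
    (inter_mem (Ioo_mem_nhdsLT ((le_max_left l 0).trans_lt hlr)) (htend (Iio_mem_nhds hε)))
  exact ⟨x, ⟨hx.1, hx.2.trans (hlt r hrA)⟩, hfx⟩

theorem isGreatest_mrca_one (hf : IsExcursion f) {u : ℝ} (hu : u ∈ Icc (0:ℝ) 1) :
    IsGreatest {r | r ∈ Icc 0 u ∧ lm f r = 0} (mrca f u 1) := by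
  set A := {r | r ∈ Icc 0 u ∧ lm f r = 0}
  have hmrca : mrca f u 1 = sSup A := by
    refine congrArg sSup (ext fun r => ⟨fun ⟨hr0, hru, hr1⟩ => ?_, fun ⟨⟨hr0, hru⟩, hlm⟩ => ?_⟩)
    · exact ⟨⟨hr0, hru.1⟩, (hf.pre_one_iff ⟨hr0, hru.1.trans hu.2⟩).1 hr1⟩
    · exact ⟨hr0, hf.pre_of_lm_eq_zero hlm hru, hf.pre_of_lm_eq_zero hlm (hru.trans hu.2)⟩
  have h0 : (0:ℝ) ∈ A := ⟨⟨le_rfl, hu.1⟩, by simp [lm]⟩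
  have hbdd : BddAbove A := ⟨u, fun r hr => hr.1.2⟩
  rw [hmrca]
  refine ⟨⟨⟨le_csSup hbdd h0, csSup_le ⟨0, h0⟩ fun r hr => hr.1.2⟩, ?_⟩,
    fun r hr => le_csSup hbdd hr⟩
  exact hf.lm_csSup_eq_zero ⟨0, h0⟩ fun r hr => ⟨⟨hr.1.1, hr.1.2.trans hu.2⟩, hr.2⟩

theorem dT_of_pre (hf : IsExcursion f) {s t : ℝ} (hs : s ∈ Icc (0:ℝ) 1) (hst : pre f s t) :
    dT f s t = dTanc f s t := by
  rw [dT, hf.mrca_of_pre hs hst, dTanc_self, zero_add]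

theorem dT_one (hf : IsExcursion f) {u : ℝ} (hu : u ∈ Icc (0:ℝ) 1) :
    dT f u 1 = dTanc f (mrca f u 1) u := by
  obtain ⟨⟨hM0, hMu⟩, hMlm⟩ := (hf.isGreatest_mrca_one hu).1
  rw [dT, hf.dTanc_eq_zero_of_lm_eq_zero hM0 (hf.pre_of_lm_eq_zero hMlm (hMu.trans hu.2)) le_rfl
    hf.lm_one, add_zero]

end IsExcursion

theorem statement7 (f : ℝ → ℝ) (hf : IsExcursion f) (s t : ℝ)
    (hs : s ∈ Icc (0:ℝ) 1) (ht : t ∈ Icc (0:ℝ) 1) (hst : pre f s t) :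
    dT f t 1 = dT f s 1 + dT f s t := by
  rw [hf.dT_one ht, hf.dT_one hs, hf.dT_of_pre hs hst]
  obtain ⟨⟨⟨hM0, hMt⟩, hMlm⟩, hMub⟩ := hf.isGreatest_mrca_one ht
  rcases lt_or_ge s (mrca f t 1) with hsM | hMs
  · have hslm : lm f s = 0 := le_antisymm
      (hst.2.trans ((hf.infIcc_le_lm hsM hMt ⟨hs.1.trans_lt hsM, hMt.trans ht.2⟩).trans hMlm.le))
      (hf.lm_nonneg hs)
    have hms : mrca f s 1 = s :=
      (hf.isGreatest_mrca_one hs).unique ⟨⟨⟨hs.1, le_rfl⟩, hslm⟩, fun _ hr => hr.1.2⟩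
    have hsM' := hf.pre_of_lm_eq_zero hslm hsM.le
    rw [hms, dTanc_self, zero_add, hf.dTanc_add hs.1 hsM' (hf.pre_of_lm_eq_zero hMlm hMt) ht.2,
      hf.dTanc_eq_zero_of_lm_eq_zero hs.1 hsM' (hMt.trans ht.2) hMlm, zero_add]
  · have hmM : mrca f s 1 = mrca f t 1 := (hf.isGreatest_mrca_one hs).unique
      ⟨⟨⟨hM0, hMs⟩, hMlm⟩, fun r hr => hMub ⟨⟨hr.1.1, hr.1.2.trans hst.1⟩, hr.2⟩⟩
    rw [hmM, hf.dTanc_add hM0 (hf.pre_of_lm_eq_zero hMlm hMs) hst ht.2]
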